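/- For codes C_i over the component rings R_i of a finite product ring R = ∏ R_i, the dual of the Chinese product satisfies CRT(C₁,…,C_k)^⊥ = CRT(C₁^⊥,…,C_k^⊥). -/

import Mathlib

/-! Over `R = ∏ Rᵢ` the inner product is computed componentwise, which gives `⊇`. For `⊆`,
test `u` against the codeword that equals `v ∈ Cᵢ` in component `i` and vanishes elsewhere. -/

theorem Finset.sum_mul_pi_apply {κ ι : Type*} {R : ι → Type*}
    [∀ i, NonUnitalNonAssocSemiring (R i)] (s : Finset κ) (u v : κ → ∀ i, R i) (i : ι) :
    (∑ j ∈ s, u j * v j) i = ∑ j ∈ s, u j i * v j i := by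
  simp only [Finset.sum_apply, Pi.mul_apply]

theorem Submodule.pi_single_comp_mem {ι : Type*} [DecidableEq ι] {R : ι → Type*}
    [∀ i, Semiring (R i)] {n : Type*} (C : ∀ i, Submodule (R i) (n → R i)) {i : ι}
    {v : n → R i} (hv : v ∈ C i) (i' : ι) :
    (fun j => Pi.single (M := R) i (v j) i') ∈ C i' := by
  by_cases hi : i' = i
  · subst hi
    simpa using hv
  · simp only [Pi.single_eq_of_ne hi]
    exact (C i').zero_mem

theorem stmt_13_general (ι : Type*) (R : ι → Type*) [∀ i, CommRing (R i)]
    (n : ℕ)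
    (C : ∀ i, Submodule (R i) (Fin n → R i)) :
    {u : Fin n → ∀ i, R i |
        ∀ v ∈ {c : Fin n → ∀ i, R i | ∀ i, (fun j => c j i) ∈ C i},
          ∑ j, u j * v j = 0} =
      {u : Fin n → ∀ i, R i |
        ∀ i, (fun j => u j i) ∈ {w : Fin n → R i | ∀ v ∈ C i, ∑ j, w j * v j = 0}} := by
  classical
  ext u
  constructor
  · intro hu i v hv
    have h := congrFun (hu _ (Submodule.pi_single_comp_mem C hv)) i
    simpa only [Finset.sum_mul_pi_apply, Pi.single_eq_same, Pi.zero_apply] using h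
  · intro hu v hv
    funext i
    simpa only [Finset.sum_mul_pi_apply, Pi.zero_apply] using hu i _ (hv i)

theorem stmt_13 (ι : Type*) [Fintype ι] (R : ι → Type*) [∀ i, CommRing (R i)]
    [∀ i, Fintype (R i)] (n : ℕ)
    (C : ∀ i, Submodule (R i) (Fin n → R i)) :
    {u : Fin n → ∀ i, R i |
        ∀ v ∈ {c : Fin n → ∀ i, R i | ∀ i, (fun j => c j i) ∈ C i},
          ∑ j, u j * v j = 0} =
      {u : Fin n → ∀ i, R i |
        ∀ i, (fun j => u j i) ∈ {w : Fin n → R i | ∀ v ∈ C i, ∑ j, w j * v j = 0}} :=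
  stmt_13_general ι R n C
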